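/- Let Q* be a fixed point of the Bellman operator F, let π* be a greedy policy with respect to Q*, let ε > 0 satisfy γ + ε < 1, let w ∈ ℝ^{S×A} be entrywise strictly positive, and let v = Σ_{i=0}^∞ (γ+ε)^{−i} (A_{π*}ᵀ)ⁱ w. If Q₀ ≤ Q* entrywise, then for every k ≥ 0 the value iteration iterates Q_k = F^k Q₀ satisfy (γ+ε)^k · vᵀ(Q₀ − Q*) ≤ vᵀ(Q_k − Q*) ≤ 0. -/

import Mathlib

open Finset Matrix

/-- The Bellman operator `F` for a discounted MDP:
`(F Q)(s,a) = R(s,a) + γ * Σ_{s'} P(s'|s,a) * max_{a'} Q(s',a')`. -/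
noncomputable def bellman {S A : Type*} [Fintype S] [Fintype A] [Nonempty A]
    (γ : ℝ) (P : S → A → S → ℝ) (R : S → A → ℝ) (Q : S × A → ℝ) : S × A → ℝ :=
  fun p =>
    R p.1 p.2 +
      γ * ∑ s' : S, P p.1 p.2 s' * Finset.univ.sup' Finset.univ_nonempty (fun a' => Q (s', a'))

/-- The matrix of the linear map `A_π` on `ℝ^{S×A}` associated with a deterministic
policy `π : S → A`: `(A_π x)(s,a) = γ * Σ_{s'} P(s'|s,a) * x(s', π(s'))`.
Its entry at row `(s,a)`, column `(s',a')` is `γ * P(s'|s,a)` if `a' = π s'`, else `0`. -/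
noncomputable def polMat {S A : Type*} [Fintype S] [Fintype A] [DecidableEq A]
    (γ : ℝ) (P : S → A → S → ℝ) (π : S → A) : Matrix (S × A) (S × A) ℝ :=
  Matrix.of fun p q => if q.2 = π q.1 then γ * P p.1 p.2 q.1 else 0

/-! Shifting the series defining `v` by one index gives `A_πᵀ v = (γ + ε) (v - w)`, and `v ≥ 0`;
the series converges because `A_π ≥ 0` has row sums `γ < γ + ε`. Since `π*` is greedy for `Q*`,
`F Q - Q* ≥ A_π (Q - Q*)` entrywise, so for `Q ≤ Q*`
`vᵀ (F Q - Q*) ≥ (A_πᵀ v)ᵀ (Q - Q*) = (γ + ε) vᵀ (Q - Q*) - (γ + ε) wᵀ (Q - Q*)`,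
which is at least `(γ + ε) vᵀ (Q - Q*)`. Monotonicity of `F` keeps every iterate below `Q*`,
and the bound follows by induction. -/

section NonnegMatrix

variable {ι : Type*} [Fintype ι] {M : Matrix ι ι ℝ}

theorem mulVec_nonneg_of_nonneg (hM : ∀ i j, 0 ≤ M i j) {x : ι → ℝ} (hx : 0 ≤ x) :
    0 ≤ M *ᵥ x :=
  fun i => dotProduct_nonneg_of_nonneg (fun j => hM i j) hx

theorem mulVec_mono_of_nonneg (hM : ∀ i j, 0 ≤ M i j) : Monotone (M *ᵥ ·) := fun x y hxy => by
  simpa only [mulVec_sub, sub_nonneg] using mulVec_nonneg_of_nonneg hM (sub_nonneg.2 hxy)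

theorem smul_dotProduct_le_dotProduct_mulVec {v w x : ι → ℝ} {c : ℝ}
    (hv : Mᵀ *ᵥ v = c • (v - w)) (hc : 0 ≤ c) (hw : 0 ≤ w) (hx : x ≤ 0) :
    c * (v ⬝ᵥ x) ≤ v ⬝ᵥ (M *ᵥ x) := by
  have hwx : w ⬝ᵥ x ≤ 0 := by
    simpa using dotProduct_le_dotProduct_of_nonneg_left hx hw
  calc c * (v ⬝ᵥ x) ≤ c * (v ⬝ᵥ x) - c * (w ⬝ᵥ x) :=
        (le_sub_self_iff _).2 (mul_nonpos_of_nonneg_of_nonpos hc hwx)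
    _ = v ⬝ᵥ (M *ᵥ x) := by
      rw [dotProduct_mulVec, ← mulVec_transpose, hv, smul_dotProduct, sub_dotProduct,
        smul_eq_mul, mul_sub]

variable [DecidableEq ι]

theorem pow_mulVec_nonneg_of_nonneg (hM : ∀ i j, 0 ≤ M i j) {x : ι → ℝ} (hx : 0 ≤ x) (n : ℕ) :
    0 ≤ M ^ n *ᵥ x := by
  induction n with
  | zero => simpa using hx
  | succ n ih => simpa only [pow_succ', ← mulVec_mulVec] using mulVec_nonneg_of_nonneg hM ih

theorem pow_mulVec_one_le (hM : ∀ i j, 0 ≤ M i j) {r : ℝ} (hr : 0 ≤ r) (h1 : M *ᵥ 1 ≤ r • 1)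
    (n : ℕ) : M ^ n *ᵥ 1 ≤ r ^ n • 1 := by
  induction n with
  | zero => simp
  | succ n ih =>
    calc M ^ (n + 1) *ᵥ 1 = M *ᵥ (M ^ n *ᵥ 1) := by rw [pow_succ', mulVec_mulVec]
      _ ≤ M *ᵥ (r ^ n • 1) := mulVec_mono_of_nonneg hM ih
      _ = r ^ n • (M *ᵥ 1) := mulVec_smul _ _ _
      _ ≤ r ^ n • r • 1 := smul_le_smul_of_nonneg_left h1 (pow_nonneg hr n)
      _ = r ^ (n + 1) • 1 := by rw [smul_smul, pow_succ]

theorem transpose_pow_mulVec_apply_le (hM : ∀ i j, 0 ≤ M i j) {r : ℝ} (hr : 0 ≤ r)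
    (h1 : M *ᵥ 1 ≤ r • 1) {w : ι → ℝ} (hw : 0 ≤ w) (n : ℕ) (i : ι) :
    (Mᵀ ^ n *ᵥ w) i ≤ r ^ n * ∑ j, w j := by
  have hnonneg := pow_mulVec_nonneg_of_nonneg (fun i j => hM j i) hw n
  calc (Mᵀ ^ n *ᵥ w) i ≤ 1 ⬝ᵥ (Mᵀ ^ n *ᵥ w) := by
        rw [one_dotProduct]; exact single_le_sum (fun j _ => hnonneg j) (mem_univ i)
    _ = (M ^ n *ᵥ 1) ⬝ᵥ w := by rw [dotProduct_mulVec, ← transpose_pow, vecMul_transpose]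
    _ ≤ (r ^ n • 1) ⬝ᵥ w :=
        dotProduct_le_dotProduct_of_nonneg_right (pow_mulVec_one_le hM hr h1 n) hw
    _ = r ^ n * ∑ j, w j := by rw [smul_dotProduct, one_dotProduct, smul_eq_mul]

theorem summable_inv_pow_smul_transpose_pow_mulVec (hM : ∀ i j, 0 ≤ M i j) {r c : ℝ}
    (hr : 0 ≤ r) (h1 : M *ᵥ 1 ≤ r • 1) (hrc : r < c) {w : ι → ℝ} (hw : 0 ≤ w) :
    Summable fun n : ℕ => c⁻¹ ^ n • (Mᵀ ^ n *ᵥ w) := by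
  have hc : 0 < c := hr.trans_lt hrc
  refine Pi.summable.2 fun i => ?_
  refine Summable.of_nonneg_of_le (fun n => ?_) (fun n => ?_)
    ((summable_geometric_of_lt_one (div_nonneg hr hc.le) ((div_lt_one hc).2 hrc)).mul_right
      (∑ j, w j))
  · exact mul_nonneg (by positivity) (pow_mulVec_nonneg_of_nonneg (fun i j => hM j i) hw n i)
  · calc c⁻¹ ^ n * (Mᵀ ^ n *ᵥ w) i ≤ c⁻¹ ^ n * (r ^ n * ∑ j, w j) :=
          mul_le_mul_of_nonneg_left (transpose_pow_mulVec_apply_le hM hr h1 hw n i) (by positivity)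
      _ = (r / c) ^ n * ∑ j, w j := by rw [div_pow]; ring

theorem mulVec_tsum_inv_pow_smul_pow_mulVec {B : Matrix ι ι ℝ} {c : ℝ} (hc : c ≠ 0)
    {w : ι → ℝ} (hs : Summable fun n : ℕ => c⁻¹ ^ n • (B ^ n *ᵥ w)) :
    B *ᵥ ∑' n : ℕ, c⁻¹ ^ n • (B ^ n *ᵥ w) = c • (∑' n : ℕ, c⁻¹ ^ n • (B ^ n *ᵥ w) - w) := by
  have hstep : ∀ n : ℕ,
      B *ᵥ (c⁻¹ ^ n • (B ^ n *ᵥ w)) = c • (c⁻¹ ^ (n + 1) • (B ^ (n + 1) *ᵥ w)) := by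
    intro n
    rw [mulVec_smul, mulVec_mulVec, ← pow_succ', smul_smul, pow_succ c⁻¹, mul_left_comm,
      mul_inv_cancel₀ hc, mul_one]
  rw [← mulVecLin_apply, hs.map_tsum (mulVecLin B) (mulVecLin B).continuous_of_finiteDimensional]
  simp only [mulVecLin_apply, hstep]
  rw [tsum_const_smul'' c, hs.tsum_eq_zero_add, pow_zero, pow_zero, one_smul, one_mulVec,
    add_sub_cancel_left]

end NonnegMatrix

section Bellman

variable {S A : Type*} [Fintype S] [Fintype A] {γ : ℝ} {P : S → A → S → ℝ}

theorem polMat_nonneg [DecidableEq A] (hγ : 0 ≤ γ) (hP : ∀ s a s', 0 ≤ P s a s') (π : S → A)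
    (p q : S × A) : 0 ≤ polMat γ P π p q := by
  rw [polMat, of_apply]
  split_ifs
  exacts [mul_nonneg hγ (hP _ _ _), le_rfl]

theorem polMat_mulVec_apply [DecidableEq A] (π : S → A) (x : S × A → ℝ) (p : S × A) :
    (polMat γ P π *ᵥ x) p = γ * ∑ s', P p.1 p.2 s' * x (s', π s') := by
  simp [polMat, mulVec, dotProduct, Fintype.sum_prod_type, ite_mul, mul_sum, mul_assoc]

theorem polMat_mulVec_one [DecidableEq A] (hP : ∀ s a, ∑ s', P s a s' = 1) (π : S → A) :
    polMat γ P π *ᵥ 1 = γ • 1 := by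
  ext p
  simp [polMat_mulVec_apply, hP]

variable [Nonempty A] {R : S → A → ℝ}

theorem bellman_mono (hγ : 0 ≤ γ) (hP : ∀ s a s', 0 ≤ P s a s') : Monotone (bellman γ P R) := by
  intro Q Q' h p
  unfold bellman
  gcongr with s' _ a' _
  · exact hP _ _ _
  · exact h _

theorem polMat_mulVec_sub_le_bellman_sub [DecidableEq A] (hγ : 0 ≤ γ)
    (hP : ∀ s a s', 0 ≤ P s a s') {Qstar : S × A → ℝ} (hfix : bellman γ P R Qstar = Qstar)
    {π : S → A}
    (hgreedy : ∀ s, Qstar (s, π s) = univ.sup' univ_nonempty fun a => Qstar (s, a))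
    (Q : S × A → ℝ) : polMat γ P π *ᵥ (Q - Qstar) ≤ bellman γ P R Q - Qstar := by
  intro p
  conv_rhs => rw [← hfix]
  rw [polMat_mulVec_apply]
  simp only [Pi.sub_apply, bellman, add_sub_add_left_eq_sub, ← mul_sub, ← sum_sub_distrib,
    ← hgreedy]
  gcongr with s' _
  · exact hP _ _ _
  · exact le_sup' (fun a => Q (s', a)) (mem_univ _)

end Bellman

theorem stmt17_general {S A : Type*} [Fintype S] [Fintype A] [Nonempty A]
    [DecidableEq S] [DecidableEq A]
    (γ ε : ℝ) (hγ0 : 0 ≤ γ) (hε : 0 < ε)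
    (P : S → A → S → ℝ) (hP0 : ∀ s a s', 0 ≤ P s a s')
    (hP1 : ∀ s a, ∑ s' : S, P s a s' = 1)
    (R : S → A → ℝ)
    (Qstar : S × A → ℝ) (hfix : bellman γ P R Qstar = Qstar)
    (πstar : S → A)
    (hgreedy : ∀ s : S,
      Qstar (s, πstar s) = Finset.univ.sup' Finset.univ_nonempty (fun a => Qstar (s, a)))
    (w : S × A → ℝ) (hw : ∀ p, 0 < w p)
    (v : S × A → ℝ)
    (hv : v = ∑' i : ℕ, ((γ + ε)⁻¹ ^ i) • ((polMat γ P πstar)ᵀ ^ i).mulVec w)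
    (Q₀ : S × A → ℝ) (hQ₀ : Q₀ ≤ Qstar) :
    ∀ k : ℕ,
      (γ + ε) ^ k * (v ⬝ᵥ (Q₀ - Qstar)) ≤ v ⬝ᵥ ((bellman γ P R)^[k] Q₀ - Qstar) ∧
        v ⬝ᵥ ((bellman γ P R)^[k] Q₀ - Qstar) ≤ 0 := by
  set F := bellman γ P R
  have hA := polMat_nonneg hγ0 hP0 πstar
  have hw0 : 0 ≤ w := fun p => (hw p).le
  have hc : 0 < γ + ε := by positivity
  have hs := summable_inv_pow_smul_transpose_pow_mulVec hA hγ0 (polMat_mulVec_one hP1 πstar).le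
    (lt_add_of_pos_right γ hε) hw0
  have hv0 : 0 ≤ v := hv ▸ tsum_nonneg fun n =>
    smul_nonneg (by positivity) (pow_mulVec_nonneg_of_nonneg (fun p q => hA q p) hw0 n)
  have hvw : (polMat γ P πstar)ᵀ *ᵥ v = (γ + ε) • (v - w) :=
    hv ▸ mulVec_tsum_inv_pow_smul_pow_mulVec hc.ne' hs
  have hcontract : ∀ Q ≤ Qstar, (γ + ε) * (v ⬝ᵥ (Q - Qstar)) ≤ v ⬝ᵥ (F Q - Qstar) :=
    fun Q hQ => (smul_dotProduct_le_dotProduct_mulVec hvw hc.le hw0 (sub_nonpos.2 hQ)).trans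
      (dotProduct_le_dotProduct_of_nonneg_left
        (polMat_mulVec_sub_le_bellman_sub hγ0 hP0 hfix hgreedy Q) hv0)
  have hbelow : ∀ k, F^[k] Q₀ ≤ Qstar := fun k =>
    Function.iterate_fixed hfix k ▸ (bellman_mono hγ0 hP0).iterate k hQ₀
  intro k
  refine ⟨?_, ?_⟩
  · induction k with
    | zero => simp
    | succ k ih =>
      calc (γ + ε) ^ (k + 1) * (v ⬝ᵥ (Q₀ - Qstar))
          = (γ + ε) * ((γ + ε) ^ k * (v ⬝ᵥ (Q₀ - Qstar))) := by ring
        _ ≤ (γ + ε) * (v ⬝ᵥ (F^[k] Q₀ - Qstar)) := mul_le_mul_of_nonneg_left ih hc.le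
        _ ≤ v ⬝ᵥ (F^[k + 1] Q₀ - Qstar) := by
          rw [Function.iterate_succ_apply']; exact hcontract _ (hbelow k)
  · simpa using dotProduct_le_dotProduct_of_nonneg_left (sub_nonpos.2 (hbelow k)) hv0

/-- linear Lyapunov exponential bound on the shifted orthant: under the
setting of STATEMENT 16, if `Q₀ ≤ Q*` entrywise, then for all `k ≥ 0` the iterates
`Q_k = F^k Q₀` satisfy `(γ+ε)^k vᵀ(Q₀ − Q*) ≤ vᵀ(Q_k − Q*) ≤ 0`. -/
theorem stmt17 {S A : Type*} [Fintype S] [Fintype A] [Nonempty S] [Nonempty A]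
    [DecidableEq S] [DecidableEq A]
    (γ ε : ℝ) (hγ0 : 0 ≤ γ) (hγ1 : γ < 1) (hε : 0 < ε) (hγε : γ + ε < 1)
    (P : S → A → S → ℝ) (hP0 : ∀ s a s', 0 ≤ P s a s')
    (hP1 : ∀ s a, ∑ s' : S, P s a s' = 1)
    (R : S → A → ℝ)
    (Qstar : S × A → ℝ) (hfix : bellman γ P R Qstar = Qstar)
    (πstar : S → A)
    (hgreedy : ∀ s : S,
      Qstar (s, πstar s) = Finset.univ.sup' Finset.univ_nonempty (fun a => Qstar (s, a)))
    (w : S × A → ℝ) (hw : ∀ p, 0 < w p)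
    (v : S × A → ℝ)
    (hv : v = ∑' i : ℕ, ((γ + ε)⁻¹ ^ i) • ((polMat γ P πstar)ᵀ ^ i).mulVec w)
    (Q₀ : S × A → ℝ) (hQ₀ : Q₀ ≤ Qstar) :
    ∀ k : ℕ,
      (γ + ε) ^ k * (v ⬝ᵥ (Q₀ - Qstar)) ≤ v ⬝ᵥ ((bellman γ P R)^[k] Q₀ - Qstar) ∧
        v ⬝ᵥ ((bellman γ P R)^[k] Q₀ - Qstar) ≤ 0 :=
  stmt17_general γ ε hγ0 hε P hP0 hP1 R Qstar hfix πstar hgreedy w hw v hv Q₀ hQ₀
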